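/- Let x ∈ 𝔻 with #A⁺₁(x) ≤ 1, i.e. the set A⁺₁(x) of times of the largest positive jump of x on (0,1] has at most one element. Then the record time trimmer R_trim is jointly J1-continuous at x: for every sequence x_n ∈ 𝔻 converging to x in the J1-topology there exist λ_n ∈ Λ such that simultaneously ‖λ_n − I‖ → 0, ‖x_n ∘ λ_n − x‖ → 0 and ‖R_trim(x_n) ∘ λ_n − R_trim(x)‖ → 0. -/

import Mathlib

open Filter Topology Set unitInterval

noncomputable section

open scoped Classical

instance : Fact ((0:ℝ) ≤ 1) := ⟨zero_le_one⟩

/-- The space `𝔻` of càdlàg functions on `[0,1]`: right-continuous everywhere with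
finite left limits everywhere (conditions at the endpoints hold vacuously). -/
def Cadlag (x : I → ℝ) : Prop :=
  (∀ τ : I, Tendsto x (𝓝[>] τ) (𝓝 (x τ))) ∧ (∀ τ : I, ∃ l : ℝ, Tendsto x (𝓝[<] τ) (𝓝 l))

/-- The sup-norm `‖x‖ = sup_{0 ≤ τ ≤ 1} |x(τ)|`. -/
def dNorm (x : I → ℝ) : ℝ := ⨆ τ : I, |x τ|

/-- The jump `Δx(τ) = x(τ) - x(τ-)` of `x` at `τ`, with `Δx(0) := 0`. -/
def jump (x : I → ℝ) (τ : I) : ℝ := if τ = 0 then 0 else x τ - Function.leftLim x τ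

/-- The running supremum `S(x)(τ) = sup_{0 ≤ s ≤ τ} x(s)`. -/
def runSup (x : I → ℝ) (τ : I) : ℝ := sSup (x '' {s : I | s ≤ τ})

/-- The running absolute supremum `S̃(x)(τ) = sup_{0 ≤ s ≤ τ} |x(s)|`. -/
def runAbsSup (x : I → ℝ) (τ : I) : ℝ := sSup ((fun s => |x s|) '' {s : I | s ≤ τ})

/-- The largest positive jump `S_{+Δ}(x)(τ) = sup_{0 ≤ s ≤ τ} Δx(s)`. -/
def posJumpSup (x : I → ℝ) (τ : I) : ℝ := sSup (jump x '' {s : I | s ≤ τ})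

/-- The largest modulus jump `S̃_Δ(x)(τ) = sup_{0 ≤ s ≤ τ} |Δx(s)|`. -/
def modJumpSup (x : I → ℝ) (τ : I) : ℝ := sSup ((fun s => |jump x s|) '' {s : I | s ≤ τ})

/-- The first extremal positive trimming ("trim as you go") operator
`T^{(1,+)}_{rim}(x) = x - S_{+Δ}(x)`. -/
def trimPos (x : I → ℝ) : I → ℝ := fun τ => x τ - posJumpSup x τ

/-- `Λ`: continuous strictly increasing bijections of `[0,1]` fixing the endpoints. -/
def IsTimeChange (l : I → I) : Prop := Continuous l ∧ StrictMono l ∧ l 0 = 0 ∧ l 1 = 1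

/-- Convergence in the (strong) Skorokhod `J₁`-topology. -/
def J1Tendsto (xn : ℕ → I → ℝ) (x : I → ℝ) : Prop :=
  ∃ l : ℕ → I → I, (∀ n, IsTimeChange (l n)) ∧
    Tendsto (fun n => dNorm (fun τ => (l n τ : ℝ) - (τ : ℝ))) atTop (𝓝 0) ∧
    Tendsto (fun n => dNorm (fun τ => xn n (l n τ) - x τ)) atTop (𝓝 0)

/-- `Ã_τ(x)`: the times `s ∈ (0,τ]` of the largest modulus jump of `x` on `[0,τ]`
(empty when `S̃_Δ(x)(τ) = 0`). -/
def tildeA (x : I → ℝ) (τ : I) : Set I :=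
  {s : I | 0 < s ∧ s ≤ τ ∧ 0 < |jump x s| ∧ |jump x s| = modJumpSup x τ}

/-- `A⁺_τ(x)`: the times `s ∈ (0,τ]` of the largest positive jump of `x` on `[0,τ]`
(empty when `S_{+Δ}(x)(τ) = 0`). -/
def posA (x : I → ℝ) (τ : I) : Set I :=
  {s : I | 0 < s ∧ s ≤ τ ∧ 0 < jump x s ∧ jump x s = posJumpSup x τ}

/-- The signed largest-modulus ("trim as you go") trimmer `𝔗_rim`:
`𝔗_rim(x)(τ) = x(τ) - Δx(L̃_τ(x))` if `Ã_τ(x) ≠ ∅`, `x(τ)` otherwise, where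
`L̃_τ(x) = max Ã_τ(x)`. -/
def sgnModTrim (x : I → ℝ) : I → ℝ := fun τ =>
  if (tildeA x τ).Nonempty then x τ - jump x (sSup (tildeA x τ)) else x τ

/-- The record time ("lookback") trimmer:
`R_trim(x) = x - Δx(R₁(x))·1_{[R₁(x),1]}` if `A⁺₁(x) ≠ ∅`, `x` otherwise, where
`R₁(x) = min A⁺₁(x)`. -/
def recordTrim (x : I → ℝ) : I → ℝ := fun τ =>
  if (posA x 1).Nonempty ∧ sInf (posA x 1) ≤ τ then x τ - jump x (sInf (posA x 1)) else x τ

/-- The modulus record time trimmer: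
`R̃_trim(x) = x - Δx(R̃₁(x))·1_{[R̃₁(x),1]}` if `Ã₁(x) ≠ ∅`, `x` otherwise, where
`R̃₁(x) = min Ã₁(x)`. -/
def modRecordTrim (x : I → ℝ) : I → ℝ := fun τ =>
  if (tildeA x 1).Nonempty ∧ sInf (tildeA x 1) ≤ τ then x τ - jump x (sInf (tildeA x 1)) else x τ

/-!
With `λₙ` the time changes witnessing `xₙ → x` and `εₙ := ‖xₙ ∘ λₙ - x‖`, every jump of `xₙ ∘ λₙ`
lies within `2εₙ` of the corresponding jump of `x`, and the same `λₙ` work for `R_trim`.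
If `x` has no positive jump, all positive jumps of `xₙ` are at most `2εₙ`, so trimming moves `xₙ`
by at most `2εₙ`. Otherwise the largest positive jump of `x` sits at a unique time `t₀`, and
since a càdlàg function has only finitely many large jumps, all other jumps stay below some
`c < Δx(t₀)`. Once `4εₙ < Δx(t₀) - c`, the largest positive jump of `xₙ` sits exactly at
`λₙ(t₀)`, so both trimmers remove matching jumps and `‖R_trim(xₙ) ∘ λₙ - R_trim(x)‖ ≤ 3εₙ`.
-/

open Function

variable {x z : I → ℝ} {l : I → I} {ε : ℝ}

lemma dNorm_nonneg (x : I → ℝ) : 0 ≤ dNorm x := Real.iSup_nonneg fun _ => abs_nonneg _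

lemma dNorm_le (h : ∀ t, |x t| ≤ ε) : dNorm x ≤ ε := ciSup_le h

lemma abs_le_dNorm (h : ∀ t, |x t| ≤ ε) (t : I) : |x t| ≤ dNorm x :=
  le_ciSup ⟨ε, by rintro _ ⟨s, rfl⟩; exact h s⟩ t

lemma jump_zero (x : I → ℝ) : jump x 0 = 0 := if_pos rfl

lemma nhdsLT_neBot_of_ne_zero {a : I} (ha : a ≠ 0) : (𝓝[<] a).NeBot :=
  nhdsLT_neBot_of_exists_lt ⟨0, unitInterval.pos_iff_ne_zero.2 ha⟩

namespace IsTimeChange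

lemma surjective (hl : IsTimeChange l) : Surjective l := by
  intro b
  have h := intermediate_value_Icc (zero_le_one' I) hl.1.continuousOn
  rw [hl.2.2.1, hl.2.2.2] at h
  obtain ⟨t, -, ht⟩ := h ⟨b.2.1, le_one b⟩
  exact ⟨t, ht⟩

lemma eq_zero_iff (hl : IsTimeChange l) {s : I} : l s = 0 ↔ s = 0 :=
  hl.2.1.injective.eq_iff' hl.2.2.1

lemma tendsto_nhdsLT (hl : IsTimeChange l) (a : I) : Tendsto l (𝓝[<] a) (𝓝[<] (l a)) :=
  hl.1.continuousWithinAt.tendsto_nhdsWithin fun _ hs => hl.2.1 hs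

end IsTimeChange

namespace Cadlag

lemma tendsto_leftLim (hx : Cadlag x) {a : I} (ha : a ≠ 0) :
    Tendsto x (𝓝[<] a) (𝓝 (leftLim x a)) := by
  obtain ⟨L, hL⟩ := hx.2 a
  have := nhdsLT_neBot_of_ne_zero ha
  rwa [leftLim_eq_of_tendsto hL]

lemma eventually_abs_le (hx : Cadlag x) (a : I) : ∃ C, ∀ᶠ t in 𝓝 a, |x t| ≤ C := by
  obtain ⟨L, hL⟩ := hx.2 a
  have hright : Tendsto x (𝓝[≥] a) (𝓝 (x a)) := continuousWithinAt_Ioi_iff_Ici.1 (hx.1 a)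
  refine ⟨max (|L| + 1) (|x a| + 1), ?_⟩
  rw [← nhdsLT_sup_nhdsGE, eventually_sup]
  exact ⟨(hL.abs.eventually (gt_mem_nhds (lt_add_one _))).mono fun t ht =>
      ht.le.trans (le_max_left _ _),
    (hright.abs.eventually (gt_mem_nhds (lt_add_one _))).mono fun t ht =>
      ht.le.trans (le_max_right _ _)⟩

lemma exists_abs_le (hx : Cadlag x) : ∃ C, ∀ t, |x t| ≤ C := by
  simpa using isCompact_univ.induction_on (p := fun s => ∃ C, ∀ t ∈ s, |x t| ≤ C)
    ⟨0, by simp⟩ (fun _ _ hst ⟨C, hC⟩ => ⟨C, fun t ht => hC t (hst ht)⟩)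
    (fun _ _ ⟨C, hC⟩ ⟨D, hD⟩ => ⟨max C D, fun t ht => ht.elim
      (fun h => (hC t h).trans (le_max_left _ _)) (fun h => (hD t h).trans (le_max_right _ _))⟩)
    (fun a _ => by
      obtain ⟨C, hC⟩ := hx.eventually_abs_le a
      exact ⟨_, mem_nhdsWithin_of_mem_nhds hC, C, fun _ ht => ht⟩)

lemma exists_abs_comp_sub_le (hz : Cadlag z) (hx : Cadlag x) (l : I → I) :
    ∃ C, ∀ t, |z (l t) - x t| ≤ C := by
  obtain ⟨Cz, hCz⟩ := hz.exists_abs_le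
  obtain ⟨Cx, hCx⟩ := hx.exists_abs_le
  exact ⟨Cz + Cx, fun t => (abs_sub _ _).trans (add_le_add (hCz _) (hCx t))⟩

/-- Openness of `S` lets the left limit at a point of `S ∩ U` be read off from values
in `S ∩ U`. -/
lemma eventually_abs_jump_lt_of_tendsto (hx : Cadlag x) {S : Set I} (hS : IsOpen S) {a : I}
    {L : ℝ} (hL : Tendsto x (𝓝[S] a) (𝓝 L)) (hε : 0 < ε) : ∀ᶠ s in 𝓝[S] a, |jump x s| < ε := by
  obtain ⟨U, hU, haU, hUS⟩ :=
    mem_nhdsWithin.1 (hL.eventually (eventually_abs_sub_lt L (half_pos hε)))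
  filter_upwards [inter_mem_nhdsWithin S (hU.mem_nhds haU)] with s hs
  by_cases hs0 : s = 0
  · rwa [hs0, jump_zero, abs_zero]
  have := nhdsLT_neBot_of_ne_zero hs0
  have hleft : |leftLim x s - L| ≤ ε / 2 :=
    le_of_tendsto ((hx.tendsto_leftLim hs0).sub_const L).abs <| nhdsWithin_le_nhds <|
      mem_of_superset ((hS.inter hU).mem_nhds hs) fun t ht =>
        (show |x t - L| < ε / 2 from hUS ⟨ht.2, ht.1⟩).le
  have hright : |x s - L| < ε / 2 := hUS ⟨hs.2, hs.1⟩
  rw [jump, if_neg hs0]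
  calc |x s - leftLim x s| = |(x s - L) - (leftLim x s - L)| := by ring_nf
    _ ≤ |x s - L| + |leftLim x s - L| := abs_sub _ _
    _ < ε := by linarith

lemma eventually_abs_jump_lt (hx : Cadlag x) (a : I) (hε : 0 < ε) :
    ∀ᶠ s in 𝓝[≠] a, |jump x s| < ε := by
  obtain ⟨L, hL⟩ := hx.2 a
  rw [← nhdsLT_sup_nhdsGT, eventually_sup]
  exact ⟨hx.eventually_abs_jump_lt_of_tendsto isOpen_Iio hL hε,
    hx.eventually_abs_jump_lt_of_tendsto isOpen_Ioi (hx.1 a) hε⟩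

lemma finite_setOf_le_abs_jump (hx : Cadlag x) (hε : 0 < ε) : {s | ε ≤ |jump x s|}.Finite := by
  have h : {s | |jump x s| < ε} ∈ cofinite := by
    rw [← codiscrete_eq_cofinite, codiscrete, mem_codiscreteWithin_iff_forall_mem_nhdsNE]
    exact fun a _ => mem_of_superset (hx.eventually_abs_jump_lt a hε) subset_union_left
  exact (mem_cofinite.1 h).subset fun s hs hlt =>
    (show |jump x s| < ε from hlt).not_ge hs

lemma bddAbove_range_jump (hx : Cadlag x) : BddAbove (range (jump x)) := by
  refine ((bddAbove_Iic (a := (1 : ℝ))).union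
    ((hx.finite_setOf_le_abs_jump one_pos).image (jump x)).bddAbove).mono ?_
  rintro _ ⟨s, rfl⟩
  by_cases h : 1 ≤ |jump x s|
  · exact Or.inr ⟨s, h, rfl⟩
  · exact Or.inl ((le_abs_self _).trans (not_le.1 h).le)

/-- Finitely many jumps exceed `b / 2`, so a strict bound `b` on the jumps over `T` can be
lowered to a bound `c < b`. -/
lemma exists_lt_forall_jump_le (hx : Cadlag x) {T : Set I} {b : ℝ} (hb : 0 < b)
    (hT : ∀ s ∈ T, jump x s < b) : ∃ c < b, ∀ s ∈ T, jump x s ≤ c := by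
  set big := jump x '' (T ∩ {s | b / 2 ≤ |jump x s|})
  have hbig : big.Finite :=
    ((hx.finite_setOf_le_abs_jump (half_pos hb)).subset inter_subset_right).image _
  refine ⟨max (b / 2) (sSup big), max_lt (half_lt_self hb) ?_, fun s hs => ?_⟩
  · rcases big.eq_empty_or_nonempty with h | h
    · rwa [h, Real.sSup_empty]
    · exact (hbig.csSup_lt_iff h).2 (by rintro _ ⟨s, hs, rfl⟩; exact hT s hs.1)
  · by_cases h : b / 2 ≤ |jump x s|
    · exact le_max_of_le_right (le_csSup hbig.bddAbove ⟨s, ⟨hs, h⟩, rfl⟩)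
    · exact le_max_of_le_left ((le_abs_self _).trans (not_le.1 h).le)

lemma abs_jump_comp_sub_jump_le (hx : Cadlag x) (hz : Cadlag z) (hl : IsTimeChange l)
    (hε : ∀ t, |z (l t) - x t| ≤ ε) (s : I) : |jump z (l s) - jump x s| ≤ 2 * ε := by
  by_cases hs : s = 0
  · rw [hs, hl.2.2.1, jump_zero, jump_zero, sub_zero, abs_zero]
    linarith [(abs_nonneg _).trans (hε 0)]
  have hls : l s ≠ 0 := hl.eq_zero_iff.not.2 hs
  have := nhdsLT_neBot_of_ne_zero hs
  have hleft : |leftLim z (l s) - leftLim x s| ≤ ε :=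
    le_of_tendsto ((((hz.tendsto_leftLim hls).comp (hl.tendsto_nhdsLT s)).sub
      (hx.tendsto_leftLim hs)).abs) (Eventually.of_forall hε)
  rw [jump, jump, if_neg hs, if_neg hls]
  calc |z (l s) - leftLim z (l s) - (x s - leftLim x s)|
      = |(z (l s) - x s) - (leftLim z (l s) - leftLim x s)| := by ring_nf
    _ ≤ ε + ε := (abs_sub _ _).trans (add_le_add (hε s) hleft)
    _ = 2 * ε := by ring

end Cadlag

lemma posJumpSup_one (x : I → ℝ) : posJumpSup x 1 = sSup (range (jump x)) := by
  rw [posJumpSup, show {s : I | s ≤ 1} = univ from eq_univ_of_forall le_one, image_univ]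

lemma posJumpSup_one_le (h : ∀ s, jump x s ≤ ε) : posJumpSup x 1 ≤ ε := by
  rw [posJumpSup_one]
  exact csSup_le (range_nonempty _) (forall_mem_range.2 h)

namespace Cadlag

lemma jump_le_posJumpSup_one (hx : Cadlag x) (s : I) : jump x s ≤ posJumpSup x 1 := by
  rw [posJumpSup_one]
  exact le_csSup hx.bddAbove_range_jump ⟨s, rfl⟩

lemma posJumpSup_one_nonneg (hx : Cadlag x) : 0 ≤ posJumpSup x 1 :=
  jump_zero x ▸ hx.jump_le_posJumpSup_one 0

lemma exists_jump_eq_posJumpSup_one (hx : Cadlag x) (hM : 0 < posJumpSup x 1) :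
    ∃ t, jump x t = posJumpSup x 1 := by
  by_contra! h
  obtain ⟨c, hc, hle⟩ := hx.exists_lt_forall_jump_le (T := univ) hM
    fun s _ => (hx.jump_le_posJumpSup_one s).lt_of_ne (h s)
  exact hc.not_ge (posJumpSup_one_le fun s => hle s trivial)

lemma posJumpSup_one_le_of_comp (hx : Cadlag x) (hz : Cadlag z) (hl : IsTimeChange l)
    (hε : ∀ t, |z (l t) - x t| ≤ ε) : posJumpSup z 1 ≤ posJumpSup x 1 + 2 * ε := by
  refine posJumpSup_one_le fun s' => ?_
  obtain ⟨s, rfl⟩ := hl.surjective s'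
  linarith [(abs_le.1 (hx.abs_jump_comp_sub_jump_le hz hl hε s)).2, hx.jump_le_posJumpSup_one s]

lemma finite_posA_one (hx : Cadlag x) : (posA x 1).Finite := by
  rcases (posA x 1).eq_empty_or_nonempty with h | ⟨r, hr⟩
  · simp [h]
  · refine (hx.finite_setOf_le_abs_jump (hr.2.2.2 ▸ hr.2.2.1)).subset fun s hs => ?_
    rw [mem_ofPred_eq, ← hs.2.2.2]
    exact le_abs_self _

lemma abs_recordTrim_sub_le (hx : Cadlag x) (τ : I) :
    |recordTrim x τ - x τ| ≤ posJumpSup x 1 := by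
  unfold recordTrim
  split_ifs with h
  · have hmem := h.1.csInf_mem hx.finite_posA_one
    rw [sub_sub_cancel_left, abs_neg, hmem.2.2.2, abs_of_pos (hmem.2.2.2 ▸ hmem.2.2.1)]
  · simpa using hx.posJumpSup_one_nonneg

end Cadlag

lemma mem_posA_one_of_jump_eq {s : I} (hM : 0 < posJumpSup x 1) (hs : jump x s = posJumpSup x 1) :
    s ∈ posA x 1 := by
  have hs0 : s ≠ 0 := fun h => by rw [h, jump_zero] at hs; exact hM.ne hs
  exact ⟨unitInterval.pos_iff_ne_zero.2 hs0, le_one s, hs ▸ hM, hs⟩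

lemma posA_one_eq_singleton {r : I} (hr : 0 < jump x r) (hlt : ∀ s ≠ r, jump x s < jump x r) :
    posA x 1 = {r} := by
  have hle : ∀ s, jump x s ≤ jump x r := fun s =>
    (eq_or_ne s r).elim (fun h => h ▸ le_rfl) fun h => (hlt s h).le
  have hM : posJumpSup x 1 = jump x r := le_antisymm (posJumpSup_one_le hle)
    (posJumpSup_one x ▸ le_csSup ⟨_, forall_mem_range.2 hle⟩ ⟨r, rfl⟩)
  refine eq_singleton_iff_unique_mem.2 ⟨mem_posA_one_of_jump_eq (hM ▸ hr) hM.symm, ?_⟩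
  exact fun s ⟨_, _, _, hs⟩ => by_contra fun h => (hlt s h).ne (hs.trans hM)

lemma recordTrim_of_posA_eq_singleton {r : I} (h : posA x 1 = {r}) (τ : I) :
    recordTrim x τ = if r ≤ τ then x τ - jump x r else x τ := by
  simp [recordTrim, h]

lemma abs_recordTrim_comp_sub_le_of_posJumpSup_eq_zero (hx : Cadlag x) (hz : Cadlag z)
    (hl : IsTimeChange l) (hε : ∀ t, |z (l t) - x t| ≤ ε) (hM : posJumpSup x 1 = 0) (τ : I) :
    |recordTrim z (l τ) - recordTrim x τ| ≤ 3 * ε := by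
  have hzτ := abs_le.1 (hz.abs_recordTrim_sub_le (l τ))
  have hxτ := abs_le.1 (hx.abs_recordTrim_sub_le τ)
  have hMz := hx.posJumpSup_one_le_of_comp hz hl hε
  have hdiff := abs_le.1 (hε τ)
  rw [hM] at hxτ hMz
  rw [abs_le]
  constructor <;> linarith

lemma abs_recordTrim_comp_sub_le_of_posA_eq_singleton (hx : Cadlag x) (hz : Cadlag z)
    (hl : IsTimeChange l) (hε : ∀ t, |z (l t) - x t| ≤ ε) {t₀ : I} {c : ℝ} (hA : posA x 1 = {t₀})
    (hc : ∀ s ≠ t₀, jump x s ≤ c) (hεc : 4 * ε < jump x t₀ - c) (τ : I) :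
    |recordTrim z (l τ) - recordTrim x τ| ≤ 3 * ε := by
  have hjump := hx.abs_jump_comp_sub_jump_le hz hl hε
  have ht₀ : t₀ ∈ posA x 1 := hA ▸ rfl
  have hc0 : 0 ≤ c := jump_zero x ▸ hc 0 (unitInterval.pos_iff_ne_zero.1 ht₀.1).symm
  have hε0 : 0 ≤ ε := (abs_nonneg _).trans (hε 0)
  have hjt₀ := abs_le.1 (hjump t₀)
  have hAz : posA z 1 = {l t₀} := by
    refine posA_one_eq_singleton (by linarith) fun s' hs' => ?_
    obtain ⟨s, rfl⟩ := hl.surjective s'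
    linarith [(abs_le.1 (hjump s)).2, hc s (ne_of_apply_ne l hs')]
  have hdiff := abs_le.1 (hε τ)
  simp only [recordTrim_of_posA_eq_singleton hAz, recordTrim_of_posA_eq_singleton hA,
    hl.2.1.le_iff_le]
  split_ifs <;> rw [abs_le] <;> constructor <;> linarith

lemma Cadlag.exists_abs_recordTrim_comp_sub_le (hx : Cadlag x) (hA : (posA x 1).Subsingleton) :
    ∃ δ > 0, ∀ (z : I → ℝ) (l : I → I) (ε : ℝ), Cadlag z → IsTimeChange l →
      (∀ t, |z (l t) - x t| ≤ ε) → ε < δ → ∀ τ, |recordTrim z (l τ) - recordTrim x τ| ≤ 3 * ε := by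
  rcases hx.posJumpSup_one_nonneg.eq_or_lt with hM | hM
  · exact ⟨1, one_pos, fun z l ε hz hl hε _ =>
      abs_recordTrim_comp_sub_le_of_posJumpSup_eq_zero hx hz hl hε hM.symm⟩
  obtain ⟨t₀, ht₀⟩ := hx.exists_jump_eq_posJumpSup_one hM
  have ht₀A := mem_posA_one_of_jump_eq hM ht₀
  have hlt : ∀ s ∈ {s | s ≠ t₀}, jump x s < jump x t₀ := fun s hs =>
    (ht₀ ▸ hx.jump_le_posJumpSup_one s).lt_of_ne fun h =>
      hs (hA (mem_posA_one_of_jump_eq hM (h.trans ht₀)) ht₀A)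
  obtain ⟨c, hc, hle⟩ := hx.exists_lt_forall_jump_le (ht₀ ▸ hM) hlt
  exact ⟨(jump x t₀ - c) / 4, by linarith, fun z l ε hz hl hε hδ =>
    abs_recordTrim_comp_sub_le_of_posA_eq_singleton hx hz hl hε (hA.eq_singleton_of_mem ht₀A)
      hle (by linarith)⟩

/-- if `#A⁺₁(x) ≤ 1` then the record time trimmer `R_trim` is jointly
`J₁`-continuous at `x`. -/
theorem stmt10 (x : I → ℝ) (hx : Cadlag x) (hA : (posA x 1).Subsingleton)
    (xn : ℕ → I → ℝ) (hxn : ∀ n, Cadlag (xn n)) (hJ1 : J1Tendsto xn x) :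
    ∃ l : ℕ → I → I, (∀ n, IsTimeChange (l n)) ∧
      Tendsto (fun n => dNorm (fun τ => (l n τ : ℝ) - (τ : ℝ))) atTop (𝓝 0) ∧
      Tendsto (fun n => dNorm (fun τ => xn n (l n τ) - x τ)) atTop (𝓝 0) ∧
      Tendsto (fun n => dNorm (fun τ => recordTrim (xn n) (l n τ) - recordTrim x τ))
        atTop (𝓝 0) := by
  obtain ⟨l, hl, hlI, hlx⟩ := hJ1
  obtain ⟨δ, hδ, hR⟩ := hx.exists_abs_recordTrim_comp_sub_le hA
  refine ⟨l, hl, hlI, hlx, ?_⟩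
  have hε : ∀ n τ, |xn n (l n τ) - x τ| ≤ dNorm (fun τ => xn n (l n τ) - x τ) := fun n => by
    obtain ⟨C, hC⟩ := (hxn n).exists_abs_comp_sub_le hx (l n)
    exact abs_le_dNorm hC
  refine squeeze_zero' (Eventually.of_forall fun n => dNorm_nonneg _) ?_
    (by simpa using hlx.const_mul 3)
  filter_upwards [hlx.eventually (gt_mem_nhds hδ)] with n hn
  exact dNorm_le (hR (xn n) (l n) _ (hxn n) (hl n) (hε n) hn)

end
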